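/- In a finite MDP with discount γ ∈ (0,1), differentiable positive policy π_θ, and objective J(θ) := V^{π_θ}(s₀), the policy gradient identity holds: ∇_θ J(θ) = ∑_s ρ^{π_θ}(s) ∑_a ∇_θ π_θ(a|s) Q^{π_θ}(s, a), where ρ^{π_θ}(s) := ∑_{k=0}^∞ γᵏ P(s₀ → s, k, π_θ) is the discounted state visitation measure. -/

import Mathlib

open Finset

section SingleAgent

variable {S A : Type*} [Fintype S] [Fintype A] [DecidableEq S]

/-- One-step state-distribution update under policy and transition kernel. -/
def sStep (π : S → A → ℝ) (P : S → A → S → ℝ) (d : S → ℝ) : S → ℝ :=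
  fun s' => ∑ s, ∑ a, d s * π s a * P s a s'

/-- Expected one-step reward under a state distribution. -/
def sExpR (π : S → A → ℝ) (R : S → A → ℝ) (d : S → ℝ) : ℝ :=
  ∑ s, ∑ a, d s * π s a * R s a

/-- Point-mass distribution at a state. -/
def sDelta (s : S) : S → ℝ := fun s' => if s' = s then 1 else 0

/-- Value function `V(s) = E[∑ γ^t R_t | s₀ = s]`. -/
noncomputable def sV (π : S → A → ℝ) (P : S → A → S → ℝ) (R : S → A → ℝ) (γ : ℝ)
    (s : S) : ℝ :=
  ∑' k : ℕ, γ ^ k * sExpR π R ((sStep π P)^[k] (sDelta s))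

/-- Action-value function `Q(s,a) = E[∑ γ^t R_t | s₀ = s, a₀ = a]`. -/
noncomputable def sQ (π : S → A → ℝ) (P : S → A → S → ℝ) (R : S → A → ℝ) (γ : ℝ)
    (s : S) (a : A) : ℝ :=
  R s a + ∑' k : ℕ, γ ^ (k + 1) * sExpR π R ((sStep π P)^[k] (P s a))

/-- Discounted state visitation measure `ρ^π(s) = ∑_k γ^k P(s₀ → s, k, π)`. -/
noncomputable def sRho (π : S → A → ℝ) (P : S → A → S → ℝ) (γ : ℝ) (s₀ s : S) : ℝ :=
  ∑' k : ℕ, γ ^ k * ((sStep π P)^[k] (sDelta s₀)) s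

end SingleAgent

/-!
Write `W_π` for the state-transition matrix `W_π s s' = ∑ a, π s a * P s a s'` and `r_π` for
the expected one-step reward. Summing the Neumann series, `V = (1 - γ W_π)⁻¹ r_π`, the row `s₀`
of `(1 - γ W_π)⁻¹` is `ρ(s₀, ·)`, and `Q(s, a) = R s a + γ ∑ t, P s a t * V t`. Since `W_π` and
`r_π` are linear in `π`, differentiating gives `dV = (1 - γ W_π)⁻¹ (r_{dπ} + γ W_{dπ} V)`, and
`(r_{dπ} + γ W_{dπ} V) s = ∑ a, dπ s a * Q s a`. This is the policy gradient identity for the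
tabular policy; the chain rule through `θ ↦ π θ` gives the theorem.
-/

namespace Matrix

variable {n : Type*} [Fintype n] [DecidableEq n]

attribute [local instance] Matrix.linftyOpNormedRing Matrix.linftyOpNormedAlgebra

theorem linfty_opNorm_le_one_of_mem_rowStochastic {M : Matrix n n ℝ}
    (hM : M ∈ rowStochastic ℝ n) : ‖M‖ ≤ 1 := by
  rw [linfty_opNorm_def, NNReal.coe_le_one, Finset.sup_le_iff]
  intro i _
  rw [← NNReal.coe_le_one]
  push_cast
  simp_rw [Real.norm_of_nonneg (nonneg_of_mem_rowStochastic hM),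
    sum_row_of_mem_rowStochastic hM i, le_refl]

theorem hasSum_vecMul_pow_dotProduct {N : Matrix n n ℝ} (hN : ‖N‖ < 1) (d v : n → ℝ) :
    HasSum (fun k : ℕ => (d ᵥ* N ^ k) ⬝ᵥ v) ((d ᵥ* Ring.inverse (1 - N)) ⬝ᵥ v) :=
  let φ : Matrix n n ℝ →ₗ[ℝ] ℝ :=
    { toFun := fun M => (d ᵥ* M) ⬝ᵥ v
      map_add' := fun M M' => by simp only [vecMul_add, add_dotProduct]
      map_smul' := fun c M => by simp only [vecMul_smul, smul_dotProduct, RingHom.id_apply] }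
  (hasSum_geom_series_inverse N hN).mapL (LinearMap.toContinuousLinearMap φ)

end Matrix

open Matrix

section MDP

variable {S A : Type*} [Fintype A]

def transitionMatrix (P : S → A → S → ℝ) : (S → A → ℝ) →ₗ[ℝ] Matrix S S ℝ where
  toFun π := Matrix.of fun s s' => ∑ a, π s a * P s a s'
  map_add' π π' := by ext; simp [add_mul, Finset.sum_add_distrib]
  map_smul' c π := by ext; simp [Finset.mul_sum, mul_assoc]

@[simp]
theorem transitionMatrix_apply (P : S → A → S → ℝ) (π : S → A → ℝ) (s s' : S) :
    transitionMatrix P π s s' = ∑ a, π s a * P s a s' := rfl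

def expectedReward (R : S → A → ℝ) : (S → A → ℝ) →ₗ[ℝ] S → ℝ where
  toFun π s := ∑ a, π s a * R s a
  map_add' π π' := by ext; simp [add_mul, Finset.sum_add_distrib]
  map_smul' c π := by ext; simp [Finset.mul_sum, mul_assoc]

@[simp]
theorem expectedReward_apply (R : S → A → ℝ) (π : S → A → ℝ) (s : S) :
    expectedReward R π s = ∑ a, π s a * R s a := rfl

theorem sStep_eq_vecMul [Fintype S] (π : S → A → ℝ) (P : S → A → S → ℝ) (d : S → ℝ) :
    sStep π P d = d ᵥ* transitionMatrix P π := by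
  ext s'
  simp [sStep, vecMul, dotProduct, Finset.mul_sum, mul_assoc]

theorem iterate_sStep [Fintype S] [DecidableEq S] (π : S → A → ℝ) (P : S → A → S → ℝ)
    (d : S → ℝ) (k : ℕ) :
    (sStep π P)^[k] d = d ᵥ* transitionMatrix P π ^ k := by
  induction k with
  | zero => simp
  | succ k ih => rw [Function.iterate_succ_apply', ih, sStep_eq_vecMul, vecMul_vecMul, pow_succ]

theorem sExpR_eq_dotProduct [Fintype S] (π : S → A → ℝ) (R : S → A → ℝ) (d : S → ℝ) :
    sExpR π R d = d ⬝ᵥ expectedReward R π := by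
  simp [sExpR, dotProduct, Finset.mul_sum, mul_assoc]

theorem sDelta_eq_single [DecidableEq S] (s : S) :
    sDelta s = Pi.single s (1 : ℝ) := by
  ext s'
  simp [sDelta, Pi.single_apply]

theorem transitionMatrix_mem_rowStochastic [Fintype S] [DecidableEq S] {P : S → A → S → ℝ}
    {π : S → A → ℝ} (hP0 : ∀ s a s', 0 ≤ P s a s') (hP1 : ∀ s a, ∑ s', P s a s' = 1)
    (hπ0 : ∀ s a, 0 ≤ π s a) (hπ1 : ∀ s, ∑ a, π s a = 1) :
    transitionMatrix P π ∈ rowStochastic ℝ S := by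
  refine mem_rowStochastic_iff_sum.2 ⟨fun s s' => ?_, fun s => ?_⟩
  · exact Finset.sum_nonneg fun a _ => mul_nonneg (hπ0 s a) (hP0 s a s')
  · simp only [transitionMatrix_apply]
    rw [Finset.sum_comm]
    simp [← Finset.mul_sum, hP1, hπ1]

theorem expectedReward_add_smul_transitionMatrix_mulVec [Fintype S] (P : S → A → S → ℝ)
    (R : S → A → ℝ) (γ : ℝ) (π : S → A → ℝ) (v : S → ℝ) :
    expectedReward R π + γ • (transitionMatrix P π *ᵥ v) =
      fun s => ∑ a, π s a * (R s a + γ * (P s a ⬝ᵥ v)) := by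
  ext s
  simp only [Pi.add_apply, Pi.smul_apply, expectedReward_apply, mulVec, dotProduct,
    transitionMatrix_apply, smul_eq_mul, mul_add, Finset.sum_add_distrib, Finset.mul_sum,
    Finset.sum_mul]
  rw [Finset.sum_comm]
  exact congrArg _ (Finset.sum_congr rfl fun _ _ => Finset.sum_congr rfl fun _ _ => by ring)

noncomputable def discountedResolvent [Fintype S] [DecidableEq S] (P : S → A → S → ℝ) (γ : ℝ)
    (π : S → A → ℝ) : Matrix S S ℝ :=
  Ring.inverse (1 - γ • transitionMatrix P π)

section Resolvent

variable [Fintype S] [DecidableEq S] {P : S → A → S → ℝ} {γ : ℝ}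

attribute [local instance] Matrix.linftyOpNormedRing Matrix.linftyOpNormedAlgebra

theorem norm_smul_transitionMatrix_lt_one {π : S → A → ℝ}
    (hP0 : ∀ s a s', 0 ≤ P s a s') (hP1 : ∀ s a, ∑ s', P s a s' = 1)
    (hπ0 : ∀ s a, 0 ≤ π s a) (hπ1 : ∀ s, ∑ a, π s a = 1) (hγ0 : 0 ≤ γ) (hγ1 : γ < 1) :
    ‖γ • transitionMatrix P π‖ < 1 := by
  rw [norm_smul, Real.norm_of_nonneg hγ0]
  calc γ * ‖transitionMatrix P π‖ ≤ γ * 1 := by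
        gcongr
        exact linfty_opNorm_le_one_of_mem_rowStochastic
          (transitionMatrix_mem_rowStochastic hP0 hP1 hπ0 hπ1)
    _ < 1 := by linarith

theorem hasSum_discounted_vecMul_dotProduct {π : S → A → ℝ}
    (hW : ‖γ • transitionMatrix P π‖ < 1) (d v : S → ℝ) :
    HasSum (fun k : ℕ => γ ^ k * ((d ᵥ* transitionMatrix P π ^ k) ⬝ᵥ v))
      ((d ᵥ* discountedResolvent P γ π) ⬝ᵥ v) := by
  simpa [discountedResolvent, smul_pow, vecMul_smul, smul_dotProduct] using
    hasSum_vecMul_pow_dotProduct hW d v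

theorem sV_eq_discountedResolvent_mulVec {π : S → A → ℝ} (R : S → A → ℝ)
    (hW : ‖γ • transitionMatrix P π‖ < 1) (s : S) :
    sV π P R γ s = (discountedResolvent P γ π *ᵥ expectedReward R π) s := by
  simp only [sV, iterate_sStep, sExpR_eq_dotProduct]
  rw [(hasSum_discounted_vecMul_dotProduct hW _ _).tsum_eq, sDelta_eq_single, single_one_vecMul]
  rfl

theorem sRho_eq_discountedResolvent {π : S → A → ℝ} (hW : ‖γ • transitionMatrix P π‖ < 1)
    (s₀ s : S) :
    sRho π P γ s₀ s = discountedResolvent P γ π s₀ s := by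
  have h := hasSum_discounted_vecMul_dotProduct hW (sDelta s₀) (Pi.single s 1)
  simp only [dotProduct_single, mul_one] at h
  simp only [sRho, iterate_sStep]
  rw [h.tsum_eq, sDelta_eq_single, single_one_vecMul]
  rfl

theorem sQ_eq_discountedResolvent {π : S → A → ℝ} (R : S → A → ℝ)
    (hW : ‖γ • transitionMatrix P π‖ < 1) (s : S) (a : A) :
    sQ π P R γ s a =
      R s a + γ * (P s a ⬝ᵥ (discountedResolvent P γ π *ᵥ expectedReward R π)) := by
  simp only [sQ, iterate_sStep, sExpR_eq_dotProduct, pow_succ', mul_assoc]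
  rw [tsum_mul_left, (hasSum_discounted_vecMul_dotProduct hW _ _).tsum_eq, dotProduct_mulVec]

theorem sum_sRho_mul_sQ_mul_eq {π : S → A → ℝ} (R : S → A → ℝ)
    (hW : ‖γ • transitionMatrix P π‖ < 1) (p : S → A → ℝ) (s₀ : S) :
    ∑ s, ∑ a, sRho π P γ s₀ s * sQ π P R γ s a * p s a =
      (discountedResolvent P γ π *ᵥ (expectedReward R p +
        γ • (transitionMatrix P p *ᵥ (discountedResolvent P γ π *ᵥ expectedReward R π)))) s₀ := by
  rw [expectedReward_add_smul_transitionMatrix_mulVec]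
  simp only [sRho_eq_discountedResolvent hW, sQ_eq_discountedResolvent R hW, mulVec, dotProduct,
    Finset.mul_sum]
  exact Finset.sum_congr rfl fun s _ => Finset.sum_congr rfl fun a _ => by ring

theorem hasFDerivAt_discountedResolvent {π₀ : S → A → ℝ}
    (hu : IsUnit (1 - γ • transitionMatrix P π₀)) :
    HasFDerivAt (discountedResolvent P γ)
      ((ContinuousLinearMap.mulLeftRight ℝ (Matrix S S ℝ) (discountedResolvent P γ π₀)
        (discountedResolvent P γ π₀)).comp
        (γ • LinearMap.toContinuousLinearMap (transitionMatrix P))) π₀ := by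
  have hinv := hasFDerivAt_ringInverse (𝕜 := ℝ) hu.unit
  rw [hu.unit_spec, ← Ring.inverse_unit, hu.unit_spec] at hinv
  have hW := ((LinearMap.toContinuousLinearMap (transitionMatrix P)).hasFDerivAt
    (x := π₀)).const_smul γ |>.const_sub 1
  refine (hinv.comp π₀ hW).congr_fderiv ?_
  rw [ContinuousLinearMap.neg_comp, ContinuousLinearMap.comp_neg, neg_neg]
  rfl

theorem hasFDerivAt_sV (R : S → A → ℝ) {π₀ : S → A → ℝ}
    (hP0 : ∀ s a s', 0 ≤ P s a s') (hP1 : ∀ s a, ∑ s', P s a s' = 1)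
    (hπ0 : ∀ s a, 0 ≤ π₀ s a) (hπ1 : ∀ s, ∑ a, π₀ s a = 1) (hγ0 : 0 ≤ γ) (hγ1 : γ < 1)
    (s₀ : S) :
    HasFDerivAt (fun π => sV π P R γ s₀)
      (∑ s, ∑ a, (sRho π₀ P γ s₀ s * sQ π₀ P R γ s a) •
        (ContinuousLinearMap.proj a ∘L (ContinuousLinearMap.proj s : (S → A → ℝ) →L[ℝ] A → ℝ)))
      π₀ := by
  have hW₀ := norm_smul_transitionMatrix_lt_one hP0 hP1 hπ0 hπ1 hγ0 hγ1
  -- `sV` equals the closed form only where the Neumann series converges.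
  have hnear : ∀ᶠ π in nhds π₀, ‖γ • transitionMatrix P π‖ < 1 :=
    ((LinearMap.continuous_of_finiteDimensional _).const_smul γ).norm.continuousAt.eventually
      (gt_mem_nhds hW₀)
  have hentry : ∀ t, HasFDerivAt (fun π => discountedResolvent P γ π s₀ t) _ π₀ := fun t =>
    (LinearMap.toContinuousLinearMap (entryLinearMap ℝ ℝ s₀ t)).hasFDerivAt.comp π₀
      (hasFDerivAt_discountedResolvent (isUnit_one_sub_of_norm_lt_one hW₀))
  have hreward := hasFDerivAt_pi'.1
    ((LinearMap.toContinuousLinearMap (expectedReward R)).hasFDerivAt (x := π₀))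
  have hclosed := HasFDerivAt.fun_sum (u := Finset.univ) fun t _ => (hentry t).mul (hreward t)
  refine (hclosed.congr_of_eventuallyEq (hnear.mono fun π hπ =>
    sV_eq_discountedResolvent_mulVec R hπ s₀)).congr_fderiv (ContinuousLinearMap.ext fun p => ?_)
  simp only [_root_.sum_apply, _root_.add_apply, _root_.smul_apply, ContinuousLinearMap.coe_comp,
    Function.comp_apply, LinearMap.coe_toContinuousLinearMap', ContinuousLinearMap.proj_apply,
    smul_eq_mul]
  set M := discountedResolvent P γ π₀
  calc _ = (M *ᵥ (expectedReward R p +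
          (γ • transitionMatrix P p) *ᵥ (M *ᵥ expectedReward R π₀))) s₀ := by
        rw [mulVec_add, mulVec_mulVec, mulVec_mulVec]
        simp only [Finset.sum_add_distrib, mul_comm (expectedReward R π₀ _)]
        rfl
    _ = _ := by rw [smul_mulVec, sum_sRho_mul_sQ_mul_eq R hW₀]

end Resolvent

end MDP

section SingleAgent

variable {S A : Type*} [Fintype S] [Fintype A] [DecidableEq S]

/-- the policy gradient theorem for a finite MDP. -/
theorem policy_gradient_theorem
    {E : Type*} [NormedAddCommGroup E] [NormedSpace ℝ E]
    (π : E → S → A → ℝ) (θ₀ : E) (P : S → A → S → ℝ) (R : S → A → ℝ)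
    (γ : ℝ) (hγ0 : 0 < γ) (hγ1 : γ < 1)
    (hP0 : ∀ s a s', 0 ≤ P s a s') (hP1 : ∀ s a, ∑ s', P s a s' = 1)
    (hpos : ∀ θ s a, 0 < π θ s a) (hsum : ∀ θ s, ∑ a, π θ s a = 1)
    (hdiff : ∀ s a, Differentiable ℝ (fun θ => π θ s a))
    (s₀ : S) :
    fderiv ℝ (fun θ => sV (π θ) P R γ s₀) θ₀ =
      ∑ s, ∑ a, (sRho (π θ₀) P γ s₀ s * sQ (π θ₀) P R γ s a) •
        fderiv ℝ (fun θ => π θ s a) θ₀ := by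
  have hπ : HasFDerivAt π (ContinuousLinearMap.pi fun s => ContinuousLinearMap.pi fun a =>
      fderiv ℝ (fun θ => π θ s a) θ₀) θ₀ :=
    hasFDerivAt_pi.2 fun s => hasFDerivAt_pi.2 fun a => (hdiff s a θ₀).hasFDerivAt
  have hV := hasFDerivAt_sV R hP0 hP1 (fun s a => (hpos θ₀ s a).le) (hsum θ₀) hγ0.le hγ1 s₀
  refine (hV.comp θ₀ hπ).fderiv.trans (ContinuousLinearMap.ext fun h => ?_)
  simp

end SingleAgent
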